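/- CCM strictly increases with dimension on GHZ states: fix d > 0; suppose that for every K ≥ 2, D(ρ_{GHZ_K}, (ρ_{GHZ_K})_A ⊠ (ρ_{GHZ_K})_B) = 1 for every bipartition (A,B) of the K qubits, and that for every M ≥ 2 and every bipartition (A,B) of the M qubits, D(τ_M, (τ_M)_A ⊠ (τ_M)_B) = d. Then for all M, N with 2 ≤ M < N, C(ρ_{GHZ_M}) < C(ρ_{GHZ_N}). -/

import Mathlib

open scoped BigOperators ComplexOrder Matrix

/-- Matrices representing operators on qubits indexed by `ι`. -/
abbrev QMat (ι : Type) : Type := Matrix (ι → Fin 2) (ι → Fin 2) ℂ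

/-- A multi-qubit state: positive semidefinite with trace one. -/
def IsState {ι : Type} [Fintype ι] [DecidableEq ι] (ρ : QMat ι) : Prop :=
  ρ.PosSemidef ∧ ρ.trace = 1

/-- Combine `u : A → Fin 2` with `w : Aᶜ → Fin 2` into a function on all qubits. -/
def glue {ι : Type} [Fintype ι] [DecidableEq ι] (A : Finset ι)
    (u : {x // x ∈ A} → Fin 2) (w : {x // x ∈ Aᶜ} → Fin 2) : ι → Fin 2 :=
  fun x => if h : x ∈ A then u ⟨x, h⟩ else w ⟨x, Finset.mem_compl.mpr h⟩

/-- The reduced matrix on the qubits in `A`, obtained by tracing out `Aᶜ`;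
`Tr_B ρ = reduceTo Bᶜ ρ`. -/
noncomputable def reduceTo {ι : Type} [Fintype ι] [DecidableEq ι] (A : Finset ι)
    (ρ : QMat ι) : QMat {x // x ∈ A} :=
  fun u v => ∑ w : {x // x ∈ Aᶜ} → Fin 2, ρ (glue A u w) (glue A v w)

/-- The Kronecker product of a state on `A` and a state on `Aᶜ`, with the tensor
factors placed back at their original qubit positions. -/
def boxProd {ι : Type} [Fintype ι] [DecidableEq ι] (A : Finset ι)
    (σ₁ : QMat {x // x ∈ A}) (σ₂ : QMat {x // x ∈ Aᶜ}) : QMat ι :=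
  fun x y =>
    σ₁ (fun a => x a.1) (fun a => y a.1) * σ₂ (fun b => x b.1) (fun b => y b.1)

/-- The cumulative correlation measure (CCM), defined recursively: it vanishes on
one-qubit states, and otherwise is the minimum over all bipartitions `(A, Aᶜ)` of
`2^(N-2) * D(ρ, ρ_A ⊠ ρ_{Aᶜ}) + C(ρ_A) + C(ρ_{Aᶜ})`. -/
noncomputable def CCM (D : ∀ (κ : Type) [Fintype κ] [DecidableEq κ], QMat κ → QMat κ → ℝ)
    (ι : Type) [Fintype ι] [DecidableEq ι] (ρ : QMat ι) : ℝ :=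
  if Fintype.card ι ≤ 1 then 0
  else
    sInf { r : ℝ |
      ∃ A : {A : Finset ι // A.Nonempty ∧ Aᶜ.Nonempty},
        r = (2 : ℝ) ^ (Fintype.card ι - 2) *
              D ι ρ (boxProd A.1 (reduceTo A.1 ρ) (reduceTo (A.1 : Finset ι)ᶜ ρ)) +
            CCM D {x // x ∈ A.1} (reduceTo A.1 ρ) +
            CCM D {x // x ∈ (A.1 : Finset ι)ᶜ} (reduceTo (A.1 : Finset ι)ᶜ ρ) }
termination_by Fintype.card ι
decreasing_by
  · have hA : (A.1 : Finset ι) ≠ Finset.univ := by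
      intro h
      rcases A.2.2 with ⟨x, hx⟩
      rw [h] at hx
      simp at hx
    calc Fintype.card {x // x ∈ A.1} = (A.1 : Finset ι).card := Fintype.card_coe _
      _ < Fintype.card ι := (Finset.card_lt_iff_ne_univ _).mpr hA
  · have hA : ((A.1 : Finset ι)ᶜ : Finset ι) ≠ Finset.univ :=
      (Finset.compl_ne_univ_iff_nonempty _).mpr A.2.1
    calc Fintype.card {x // x ∈ (A.1 : Finset ι)ᶜ} = ((A.1 : Finset ι)ᶜ).card :=
        Fintype.card_coe _
      _ < Fintype.card ι := (Finset.card_lt_iff_ne_univ _).mpr hA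
/-- The GHZ state vector on qubits indexed by `ι`: value `1/√2` at the all-zeros
and all-ones functions, and `0` elsewhere. -/
noncomputable def ghzVec (ι : Type) [Fintype ι] [DecidableEq ι] : (ι → Fin 2) → ℂ :=
  fun x => if x = (fun _ => 0) ∨ x = (fun _ => 1) then ((Real.sqrt 2 : ℂ))⁻¹ else 0

/-- The GHZ projector `|GHZ⟩⟨GHZ|`. -/
noncomputable def ghzProj (ι : Type) [Fintype ι] [DecidableEq ι] : QMat ι :=
  fun x y => ghzVec ι x * star (ghzVec ι y)

/-- The GHZ-diagonal state `τ = ½(e₀e₀† + e₁e₁†)`: the diagonal matrix with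
entries `½` at the all-zeros and all-ones indices and `0` elsewhere. -/
noncomputable def tau (ι : Type) [Fintype ι] [DecidableEq ι] : QMat ι :=
  fun x y =>
    (if x = (fun _ => 0) ∧ y = (fun _ => 0) then ((2 : ℂ))⁻¹ else 0) +
    (if x = (fun _ => 1) ∧ y = (fun _ => 1) then ((2 : ℂ))⁻¹ else 0)
/-- The GHZ recursion value `F(x, n)` with fixed parameter `d`:
`F(x,1) = 0`, `F(x,2) = x`, `F(x,3) = 2x + d`,
`F(x,N) = 2^(N−2)·x + 2·F(d, N/2)` for even `N ≥ 4`, and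
`F(x,N) = 2^(N−2)·x + F(d, (N−1)/2) + F(d, (N+1)/2)` for odd `N ≥ 5`. -/
noncomputable def F (d : ℝ) (x : ℝ) (n : ℕ) : ℝ :=
  if n ≤ 1 then 0
  else if n = 2 then x
  else if n = 3 then 2 * x + d
  else if n % 2 = 0 then (2 : ℝ) ^ (n - 2) * x + 2 * F d d (n / 2)
  else (2 : ℝ) ^ (n - 2) * x + F d d ((n - 1) / 2) + F d d ((n + 1) / 2)
termination_by n
decreasing_by
  · omega
  · omega
  · omega

/-!
Every proper reduction of a GHZ state, and of `τ`, is `τ` on the remaining qubits. Since `D`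
is constant on the bipartitions of both, `c n := C(τ_n)` satisfies
`c n = d·2^(n-2) + min_{0<k<n} (c k + c (n-k))` and
`C(GHZ_n) = 2^(n-2) + min_{0<k<n} (c k + c (n-k))`. For `d ≥ 0` the sequence `c` is monotone,
hence so is the split minimum, and the strictly increasing term `2^(n-2)` makes `C(GHZ_n)`
strictly increasing.
-/

section Reduction

variable {ι : Type} [Fintype ι] [DecidableEq ι]

theorem glue_eq_const (A : Finset ι) (u : {x // x ∈ A} → Fin 2)
    (w : {x // x ∈ Aᶜ} → Fin 2) (c : Fin 2) :
    glue A u w = (fun _ => c) ↔ (u = fun _ => c) ∧ (w = fun _ => c) := by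
  simp only [funext_iff, glue, Subtype.forall, Finset.mem_compl]
  constructor
  · intro h
    exact ⟨fun x hx => by simpa [hx] using h x, fun x hx => by simpa [hx] using h x⟩
  · rintro ⟨hu, hw⟩ x
    by_cases hx : x ∈ A
    · simpa [hx] using hu x hx
    · simpa [hx] using hw x hx

theorem tau_glue (A : Finset ι) (u v : {x // x ∈ A} → Fin 2) (w : {x // x ∈ Aᶜ} → Fin 2) :
    tau ι (glue A u w) (glue A v w) =
      (if (fun _ => 0) = w then (if u = (fun _ => 0) ∧ v = (fun _ => 0) then (2 : ℂ)⁻¹ else 0)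
        else 0) +
      (if (fun _ => 1) = w then (if u = (fun _ => 1) ∧ v = (fun _ => 1) then (2 : ℂ)⁻¹ else 0)
        else 0) := by
  simp only [tau, glue_eq_const]
  congr 1 <;> split_ifs <;> simp_all [eq_comm]

theorem reduceTo_tau (A : Finset ι) : reduceTo A (tau ι) = tau {x // x ∈ A} := by
  ext u v
  simp only [reduceTo, tau_glue, Finset.sum_add_distrib, Finset.sum_ite_eq, Finset.mem_univ,
    if_true]
  rfl

theorem ghzProj_apply (x y : ι → Fin 2) :
    ghzProj ι x y =
      if (x = (fun _ => 0) ∨ x = (fun _ => 1)) ∧ (y = (fun _ => 0) ∨ y = (fun _ => 1))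
      then (2 : ℂ)⁻¹ else 0 := by
  have hsq : star ((Real.sqrt 2 : ℂ))⁻¹ * ((Real.sqrt 2 : ℂ))⁻¹ = (2 : ℂ)⁻¹ := by
    rw [Complex.star_def, map_inv₀, Complex.conj_ofReal, ← mul_inv, ← Complex.ofReal_mul,
      Real.mul_self_sqrt zero_le_two, Complex.ofReal_ofNat]
  unfold ghzProj ghzVec
  split_ifs <;> simp_all [mul_comm]

theorem ghzProj_glue_eq_tau (A : Finset ι) (hA : Aᶜ.Nonempty) (u v : {x // x ∈ A} → Fin 2)
    (w : {x // x ∈ Aᶜ} → Fin 2) :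
    ghzProj ι (glue A u w) (glue A v w) = tau ι (glue A u w) (glue A v w) := by
  obtain ⟨b, hb⟩ := hA
  have h01 : (fun _ : {x // x ∈ Aᶜ} => (0 : Fin 2)) ≠ fun _ => 1 :=
    fun h => absurd (congrFun h ⟨b, hb⟩) (by decide)
  simp only [ghzProj_apply, tau, glue_eq_const]
  split_ifs <;> grind

theorem reduceTo_ghzProj (A : Finset ι) (hA : Aᶜ.Nonempty) :
    reduceTo A (ghzProj ι) = tau {x // x ∈ A} := by
  rw [← reduceTo_tau]
  ext u v
  exact Finset.sum_congr rfl fun w _ => ghzProj_glue_eq_tau A hA u v w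

end Reduction

-- Only meaningful for `2 ≤ n`: otherwise the index set is empty and `sInf ∅ = 0`.
noncomputable def splitMin (c : ℕ → ℝ) (n : ℕ) : ℝ :=
  sInf ((fun k => c k + c (n - k)) '' Set.Ioo 0 n)

section SplitMin

variable {c : ℕ → ℝ} {n : ℕ}

theorem splitMin_le {k : ℕ} (hk : k ∈ Set.Ioo 0 n) : splitMin c n ≤ c k + c (n - k) :=
  csInf_le ((Set.finite_Ioo 0 n).image _).bddBelow (Set.mem_image_of_mem _ hk)

theorem le_splitMin {x : ℝ} (hn : 2 ≤ n) (h : ∀ k ∈ Set.Ioo 0 n, x ≤ c k + c (n - k)) :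
    x ≤ splitMin c n :=
  le_csInf (Set.image_nonempty.mpr ⟨1, by simp; omega⟩) (by rintro _ ⟨k, hk, rfl⟩; exact h k hk)

/-- The split `n + 1 = n + 1` is dominated by the split `n = 1 + (n - 1)`. -/
theorem splitMin_le_splitMin_succ (hn : 2 ≤ n) (hc : ∀ m < n, c m ≤ c (m + 1)) :
    splitMin c n ≤ splitMin c (n + 1) := by
  refine le_splitMin (by omega) fun k ⟨hk0, hkn⟩ => ?_
  rcases (by omega : k < n ∨ k = n) with hkn | rfl
  · calc splitMin c n ≤ c k + c (n - k) := splitMin_le ⟨hk0, hkn⟩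
      _ ≤ c k + c (n + 1 - k) := by
        rw [Nat.sub_add_comm hkn.le]
        gcongr
        exact hc _ (by omega)
  · have hpred : c (k - 1) ≤ c k := by
      simpa [Nat.sub_add_cancel hk0] using hc (k - 1) (by omega)
    calc splitMin c k ≤ c 1 + c (k - 1) := splitMin_le ⟨one_pos, by omega⟩
      _ ≤ c k + c (k + 1 - k) := by rw [Nat.add_sub_cancel_left, add_comm]; gcongr

theorem monotone_of_eq_add_splitMin {a : ℕ → ℝ} (ha : Monotone a) (ha₂ : 0 ≤ a 2)
    (h₀ : c 0 = 0) (h₁ : c 1 = 0) (hrec : ∀ n, 2 ≤ n → c n = a n + splitMin c n) :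
    Monotone c := by
  refine monotone_nat_of_le_succ fun n => ?_
  induction n using Nat.strong_induction_on with
  | _ n ih =>
    match n with
    | 0 => rw [h₀, h₁]
    | 1 =>
      have h₂ : 0 ≤ splitMin c 2 := le_splitMin le_rfl fun k hk => by
        obtain rfl : k = 1 := by simp only [Set.mem_Ioo] at hk; omega
        simp [h₁]
      rw [h₁, hrec 2 le_rfl]
      positivity
    | n + 2 =>
      rw [hrec (n + 2) (by omega), hrec (n + 3) (by omega)]
      exact add_le_add (ha (by omega)) (splitMin_le_splitMin_succ (by omega) ih)

end SplitMin

section CCM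

variable (D : ∀ (κ : Type) [Fintype κ] [DecidableEq κ], QMat κ → QMat κ → ℝ)

theorem ccm_eq_add_splitMin {κ : Type} [Fintype κ] [DecidableEq κ] (ρ : QMat κ)
    (hκ : 2 ≤ Fintype.card κ) {x : ℝ} {c : ℕ → ℝ}
    (hD : ∀ A : Finset κ, A.Nonempty → Aᶜ.Nonempty →
      D κ ρ (boxProd A (reduceTo A ρ) (reduceTo Aᶜ ρ)) = x)
    (hc : ∀ A : Finset κ, A.Nonempty → Aᶜ.Nonempty →
      CCM D {a // a ∈ A} (reduceTo A ρ) = c A.card) :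
    CCM D κ ρ = 2 ^ (Fintype.card κ - 2) * x + splitMin c (Fintype.card κ) := by
  have hne : ((fun k => c k + c (Fintype.card κ - k)) '' Set.Ioo 0 (Fintype.card κ)).Nonempty :=
    Set.image_nonempty.mpr ⟨1, by simp; omega⟩
  have htranslate := OrderIso.map_csInf' (OrderIso.addLeft (2 ^ (Fintype.card κ - 2) * x)) hne
    ((Set.finite_Ioo _ _).image _).bddBelow
  rw [OrderIso.addLeft_apply] at htranslate
  rw [CCM, if_neg (by omega), splitMin, htranslate, Set.image_image]
  congr 1
  ext r
  constructor
  · rintro ⟨⟨A, hA, hAc⟩, rfl⟩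
    have hcard : Aᶜ.card = Fintype.card κ - A.card := Finset.card_compl A
    refine ⟨A.card, ⟨Finset.card_pos.mpr hA, ?_⟩, ?_⟩
    · have := Finset.card_pos.mpr hAc; omega
    · simp only [OrderIso.addLeft_apply, hD A hA hAc, hc A hA hAc,
        hc Aᶜ hAc (by rwa [compl_compl]), hcard]
      ring
  · rintro ⟨k, ⟨hk0, hkn⟩, rfl⟩
    obtain ⟨A, -, hA⟩ := Finset.exists_subset_card_eq (s := (Finset.univ : Finset κ)) (n := k)
      (by rw [Finset.card_univ]; omega)
    have hcard : Aᶜ.card = Fintype.card κ - k := by rw [Finset.card_compl, hA]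
    have hAne : A.Nonempty := Finset.card_pos.mp (by omega)
    have hAcne : Aᶜ.Nonempty := Finset.card_pos.mp (by omega)
    refine ⟨⟨A, hAne, hAcne⟩, ?_⟩
    simp only [OrderIso.addLeft_apply, hD A hAne hAcne, hc A hAne hAcne,
      hc Aᶜ hAcne (by rwa [compl_compl]), hcard, hA]
    ring

def HasConstBipartitionDistance (ρ : ∀ (ι : Type) [Fintype ι] [DecidableEq ι], QMat ι) (x : ℝ) :
    Prop :=
  ∀ (ι : Type) [Fintype ι] [DecidableEq ι], 2 ≤ Fintype.card ι →
    ∀ A : Finset ι, A.Nonempty → Aᶜ.Nonempty →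
      D ι (ρ ι) (boxProd A (reduceTo A (ρ ι)) (reduceTo Aᶜ (ρ ι))) = x

noncomputable def tauCCM (n : ℕ) : ℝ := CCM D (Fin n) (tau (Fin n))

variable {D} {d : ℝ}

theorem ccm_tau (hτ : HasConstBipartitionDistance D tau d) (n : ℕ) :
    ∀ (κ : Type) [Fintype κ] [DecidableEq κ], Fintype.card κ = n →
      CCM D κ (tau κ) = tauCCM D n := by
  induction n using Nat.strong_induction_on with
  | _ n ih =>
    intro κ _ _ hκ
    by_cases hn : n ≤ 1
    · rw [tauCCM, CCM, CCM, if_pos (by omega), if_pos (by simpa)]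
    have key : ∀ (ι : Type) [Fintype ι] [DecidableEq ι], Fintype.card ι = n →
        CCM D ι (tau ι) = 2 ^ (n - 2) * d + splitMin (tauCCM D) n := by
      intro ι _ _ hι
      subst hι
      refine ccm_eq_add_splitMin D _ (by omega) (hτ ι (by omega)) fun A _ ⟨b, hb⟩ => ?_
      rw [reduceTo_tau, ih _ (Finset.card_lt_univ_of_notMem (Finset.mem_compl.mp hb)) _
        (Fintype.card_coe A)]
    rw [key κ hκ, tauCCM, key (Fin n) (Fintype.card_fin n)]

theorem tauCCM_eq_add_splitMin (hτ : HasConstBipartitionDistance D tau d) {n : ℕ} (hn : 2 ≤ n) :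
    tauCCM D n = d * 2 ^ (n - 2) + splitMin (tauCCM D) n := by
  rw [tauCCM, ccm_eq_add_splitMin D _ (by simpa) (hτ _ (by simpa))
    fun A _ _ => by rw [reduceTo_tau, ccm_tau hτ _ _ (Fintype.card_coe A)],
    Fintype.card_fin, mul_comm]

theorem tauCCM_monotone (hτ : HasConstBipartitionDistance D tau d) (hd : 0 ≤ d) :
    Monotone (tauCCM D) := by
  refine monotone_of_eq_add_splitMin (a := fun n => d * 2 ^ (n - 2)) ?_ (by simpa using hd)
    ?_ ?_ fun n hn => tauCCM_eq_add_splitMin hτ hn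
  · exact fun m n hmn => mul_le_mul_of_nonneg_left
      (pow_le_pow_right₀ one_le_two (Nat.sub_le_sub_right hmn 2)) hd
  all_goals rw [tauCCM, CCM, if_pos (by simp)]

theorem ccm_ghzProj (hτ : HasConstBipartitionDistance D tau d)
    (hghz : HasConstBipartitionDistance D ghzProj 1) {κ : Type} [Fintype κ]
    [DecidableEq κ] (hκ : 2 ≤ Fintype.card κ) :
    CCM D κ (ghzProj κ) = 2 ^ (Fintype.card κ - 2) + splitMin (tauCCM D) (Fintype.card κ) := by
  rw [ccm_eq_add_splitMin D _ hκ (hghz κ hκ) fun A _ hAc => by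
    rw [reduceTo_ghzProj A hAc, ccm_tau hτ _ _ (Fintype.card_coe A)], mul_one]

end CCM

/-- CCM strictly increases with dimension on GHZ states: fix
`d > 0`; suppose that for every system of `K ≥ 2` qubits,
`D(ρ_{GHZ_K}, (ρ_{GHZ_K})_A ⊠ (ρ_{GHZ_K})_B) = 1` for every bipartition `(A,B)`,
and `D(τ_M, (τ_M)_A ⊠ (τ_M)_B) = d` for every system of `M ≥ 2` qubits and every
bipartition. Then for all `2 ≤ M < N`, `C(ρ_{GHZ_M}) < C(ρ_{GHZ_N})`. -/
theorem ccm_ghz_strictMono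
    (D : ∀ (κ : Type) [Fintype κ] [DecidableEq κ], QMat κ → QMat κ → ℝ)
    (d : ℝ) (hd : 0 < d)
    (hghz : ∀ (ι : Type) [Fintype ι] [DecidableEq ι], 2 ≤ Fintype.card ι →
      ∀ A : Finset ι, A.Nonempty → Aᶜ.Nonempty →
        D ι (ghzProj ι)
          (boxProd A (reduceTo A (ghzProj ι)) (reduceTo Aᶜ (ghzProj ι))) = 1)
    (hτ : ∀ (ι : Type) [Fintype ι] [DecidableEq ι], 2 ≤ Fintype.card ι →
      ∀ A : Finset ι, A.Nonempty → Aᶜ.Nonempty →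
        D ι (tau ι) (boxProd A (reduceTo A (tau ι)) (reduceTo Aᶜ (tau ι))) = d)
    (M N : ℕ) (hM : 2 ≤ M) (hMN : M < N) :
    CCM D (Fin M) (ghzProj (Fin M)) < CCM D (Fin N) (ghzProj (Fin N)) := by
  have hmono := tauCCM_monotone hτ hd.le
  have hstrict : StrictMono fun n => (2 : ℝ) ^ n + splitMin (tauCCM D) (n + 2) :=
    strictMono_nat_of_lt_succ fun n => add_lt_add_of_lt_of_le
      (pow_lt_pow_right₀ one_lt_two n.lt_succ_self)
      (splitMin_le_splitMin_succ (by omega) fun m _ => hmono m.le_succ)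
  obtain ⟨m, rfl⟩ := Nat.exists_eq_add_of_le' hM
  obtain ⟨n, rfl⟩ := Nat.exists_eq_add_of_le' (hM.trans hMN.le)
  rw [ccm_ghzProj hτ hghz (by simp), ccm_ghzProj hτ hghz (by simp)]
  simpa using hstrict (show m < n by omega)
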